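/- arXiv:1912.01301 — 4 statements merged into one kernel-verified Lean document; each statement's English description precedes it below -/
import Mathlib

section
/- Define for n ≥ 2 the polynomials Q_n(z) = (1/(n+2))·(n·P_n(z) − (2/(n−1))·P_{n−1}'(z)). Then for all integers k, n ≥ 2, ∫_{−1}^{1} Q_k(z)·Q_n(z) dz = c_n·δ_{kn}, where c_n = 2n(n+1)/((n−1)(n+2)(2n+1)). -/
/-!
Rodrigues' formula `Pₙ = (2ⁿ n!)⁻¹ Dⁿ (X² - 1)ⁿ` and repeated integration by parts (the derivatives
of order `< n` of `(X² - 1)ⁿ` vanish at `±1`) make `Pₙ` orthogonal to every polynomial of degree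
`< n` and give `‖Pₙ‖² = 2 / (2n + 1)`. One more integration by parts reduces the pairings
`⟨Pₐ, P'_b⟩` and `⟨P'ₐ, P'_b⟩` to the endpoint values `Pₙ(±1) = (±1)ⁿ` and
`P'ₙ(±1) = (±1)ⁿ⁺¹ n(n+1)/2`, which the Leibniz rule yields from `(X² - 1)ⁿ = (X - 1)ⁿ (X + 1)ⁿ`.
Expanding `⟨Q_k, Qₙ⟩` bilinearly, the off-diagonal contributions then cancel exactly.
-/

open Polynomial

noncomputable def legendre (n : ℕ) : Polynomial ℝ :=
  (2 ^ n * n.factorial : ℝ)⁻¹ • (fun p : Polynomial ℝ => p.derivative)^[n] ((X ^ 2 - 1) ^ n)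

open scoped Nat

namespace Polynomial

variable {R : Type*} [CommRing R]

theorem eval_iterate_derivative_X_sub_C_pow (t : R) (n j : ℕ) :
    (derivative^[j] ((X - C t) ^ n)).eval t = if j = n then (n ! : R) else 0 := by
  rw [iterate_derivative_X_sub_pow, eval_smul, eval_pow, eval_sub, eval_X, eval_C, sub_self]
  rcases lt_trichotomy j n with hjn | rfl | hnj
  · simp [hjn.ne, zero_pow (Nat.sub_ne_zero_of_lt hjn)]
  · simp [Nat.descFactorial_self]
  · simp [hnj.ne', Nat.descFactorial_eq_zero_iff_lt.mpr hnj]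

theorem eval_iterate_derivative_X_sub_C_pow_mul (t : R) (q : R[X]) (n m : ℕ) :
    (derivative^[n + m] ((X - C t) ^ n * q)).eval t
      = ((n + m).choose m * n ! : R) * (derivative^[m] q).eval t := by
  rw [iterate_derivative_mul, eval_finsetSum, Finset.sum_eq_single_of_mem m
    (Finset.mem_range.mpr (by omega))]
  · simp [eval_iterate_derivative_X_sub_C_pow, mul_assoc]
  · intro k hk hkm
    have : n + m - k ≠ n := by have := Finset.mem_range.mp hk; omega
    simp [eval_iterate_derivative_X_sub_C_pow, this]

theorem Monic.iterate_derivative_natDegree {p : R[X]} (hp : p.Monic) :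
    derivative^[p.natDegree] p = C (p.natDegree ! : R) := by
  have hdeg : (derivative^[p.natDegree] p).natDegree ≤ 0 :=
    (natDegree_iterate_derivative p _).trans (by omega)
  rw [eq_C_of_natDegree_le_zero hdeg, coeff_iterate_derivative, zero_add, hp.coeff_natDegree,
    Nat.descFactorial_self, nsmul_one]

theorem X_sq_sub_one_eq_mul {t : R} (ht : t ^ 2 = 1) :
    (X ^ 2 - 1 : R[X]) = (X - C t) * (X - C (-t)) := by
  have hCt : C t ^ 2 = 1 := by rw [← C_pow, ht, C_1]
  rw [C_neg]
  linear_combination hCt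

theorem monic_X_sq_sub_one : (X ^ 2 - 1 : R[X]).Monic := by
  simpa using monic_X_pow_sub_C (1 : R) two_ne_zero

theorem natDegree_X_sq_sub_one_pow [Nontrivial R] (n : ℕ) :
    ((X ^ 2 - 1 : R[X]) ^ n).natDegree = 2 * n := by
  rw [monic_X_sq_sub_one.natDegree_pow, ← C_1, natDegree_X_pow_sub_C, mul_comm]

theorem eval_iterate_derivative_X_sq_sub_one_pow {t : R} (ht : t ^ 2 = 1) {n j : ℕ}
    (hj : j < n) :
    (derivative^[j] ((X ^ 2 - 1 : R[X]) ^ n)).eval t = 0 := by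
  obtain ⟨r, hr⟩ := pow_sub_dvd_iterate_derivative_pow (X ^ 2 - 1 : R[X]) n j
  rw [hr, eval_mul, eval_pow, eval_sub, eval_pow, eval_X, eval_one, ht, sub_self,
    zero_pow (Nat.sub_ne_zero_of_lt hj), zero_mul]

theorem degree_derivative_lt_of_degree_le {p : R[X]} {n : ℕ} (hp : p.degree ≤ n) :
    (derivative p).degree < n := by
  by_cases h : p = 0
  · simp [h]
  · exact (degree_derivative_lt h).trans_le hp

end Polynomial

theorem legendre_eq_smul_iterate_derivative (n : ℕ) :
    legendre n = (2 ^ n * n ! : ℝ)⁻¹ • derivative^[n] ((X ^ 2 - 1 : ℝ[X]) ^ n) := rfl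

theorem degree_legendre_le (n : ℕ) : (legendre n).degree ≤ n := by
  rw [legendre_eq_smul_iterate_derivative]
  refine (degree_smul_le _ _).trans (degree_le_of_natDegree_le ?_)
  refine (natDegree_iterate_derivative _ _).trans ?_
  rw [natDegree_X_sq_sub_one_pow]
  omega

theorem eval_legendre {t : ℝ} (ht : t ^ 2 = 1) (n : ℕ) : (legendre n).eval t = t ^ n := by
  have h := eval_iterate_derivative_X_sub_C_pow_mul t ((X - C (-t)) ^ n) n 0
  rw [add_zero, ← mul_pow, ← X_sq_sub_one_eq_mul ht] at h
  rw [legendre_eq_smul_iterate_derivative, eval_smul, h]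
  simp only [Nat.choose_zero_right, Nat.cast_one, one_mul, Function.iterate_zero_apply,
    eval_pow, eval_sub, eval_X, eval_C, sub_neg_eq_add, ← two_mul, mul_pow, smul_eq_mul]
  field_simp

theorem eval_derivative_legendre {t : ℝ} (ht : t ^ 2 = 1) (n : ℕ) :
    (derivative (legendre n)).eval t = n * (n + 1) / 2 * t ^ (n + 1) := by
  have h := eval_iterate_derivative_X_sub_C_pow_mul t ((X - C (-t)) ^ n) n 1
  rw [← mul_pow, ← X_sq_sub_one_eq_mul ht] at h
  rw [legendre_eq_smul_iterate_derivative, derivative_smul,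
    ← Function.iterate_succ_apply' derivative, eval_smul, h]
  rcases n with _ | n
  · simp
  simp only [Nat.choose_one_right, Function.iterate_one, derivative_pow, derivative_sub,
    derivative_X, derivative_C, sub_zero, mul_one, eval_mul, eval_C, eval_pow, eval_sub, eval_X,
    sub_neg_eq_add, ← two_mul, mul_pow, smul_eq_mul, Nat.add_sub_cancel]
  rw [show t ^ (n + 1 + 1) = t ^ n by rw [add_assoc, pow_add, one_add_one_eq_two, ht, mul_one]]
  push_cast [Nat.factorial_succ]
  field_simp
  ring

noncomputable def integralNegOneOne : ℝ[X] →ₗ[ℝ] ℝ where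
  toFun p := ∫ z in (-1 : ℝ)..1, p.eval z
  map_add' p q := by
    simp only [eval_add]
    exact intervalIntegral.integral_add (p.continuous.intervalIntegrable _ _)
      (q.continuous.intervalIntegrable _ _)
  map_smul' a p := by simp [intervalIntegral.integral_const_mul]

theorem integralNegOneOne_apply (p : ℝ[X]) :
    integralNegOneOne p = ∫ z in (-1 : ℝ)..1, p.eval z := rfl

theorem integralNegOneOne_derivative (p : ℝ[X]) :
    integralNegOneOne (derivative p) = p.eval 1 - p.eval (-1) :=
  intervalIntegral.integral_eq_sub_of_hasDerivAt (fun x _ => p.hasDerivAt x)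
    ((derivative p).continuous.intervalIntegrable _ _)

noncomputable def legendreInner : ℝ[X] →ₗ[ℝ] ℝ[X] →ₗ[ℝ] ℝ :=
  (LinearMap.mul ℝ ℝ[X]).compr₂ integralNegOneOne

theorem legendreInner_apply (p q : ℝ[X]) :
    legendreInner p q = integralNegOneOne (p * q) := rfl

theorem legendreInner_comm (p q : ℝ[X]) : legendreInner p q = legendreInner q p := by
  rw [legendreInner_apply, legendreInner_apply, mul_comm]

theorem legendreInner_derivative_right (p q : ℝ[X]) :
    legendreInner p (derivative q) = p.eval 1 * q.eval 1 - p.eval (-1) * q.eval (-1)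
      - legendreInner (derivative p) q := by
  have h := integralNegOneOne_derivative (p * q)
  rw [derivative_mul, map_add, eval_mul, eval_mul] at h
  rw [legendreInner_apply, legendreInner_apply]
  linarith

theorem legendreInner_iterate_derivative_left {p : ℝ[X]} {j : ℕ}
    (hp : ∀ i < j, (derivative^[i] p).eval 1 = 0 ∧ (derivative^[i] p).eval (-1) = 0)
    (q : ℝ[X]) :
    legendreInner (derivative^[j] p) q = (-1) ^ j * legendreInner p (derivative^[j] q) := by
  induction j generalizing q with
  | zero => simp
  | succ j ih =>
    obtain ⟨h1, h2⟩ := hp j j.lt_succ_self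
    have hparts := legendreInner_derivative_right (derivative^[j] p) q
    rw [h1, h2, zero_mul, zero_mul, sub_self, zero_sub] at hparts
    rw [Function.iterate_succ_apply', ← neg_neg (legendreInner _ q), ← hparts,
      ih (fun i hi => hp i (by omega)), Function.iterate_succ_apply, pow_succ]
    ring

theorem legendreInner_iterate_derivative_X_sq_sub_one_pow (n : ℕ) (q : ℝ[X]) :
    legendreInner (derivative^[n] ((X ^ 2 - 1) ^ n)) q
      = (-1) ^ n * legendreInner ((X ^ 2 - 1) ^ n) (derivative^[n] q) :=
  legendreInner_iterate_derivative_left (fun _ hi =>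
    ⟨eval_iterate_derivative_X_sq_sub_one_pow (one_pow 2) hi,
      eval_iterate_derivative_X_sq_sub_one_pow (by norm_num) hi⟩) q

theorem legendreInner_legendre_eq_zero {n : ℕ} {q : ℝ[X]} (hq : q.degree < n) :
    legendreInner (legendre n) q = 0 := by
  rw [legendre_eq_smul_iterate_derivative, map_smul, LinearMap.smul_apply,
    legendreInner_iterate_derivative_X_sq_sub_one_pow, iterate_derivative_eq_zero_of_degree_lt hq,
    map_zero, mul_zero, smul_zero]

theorem derivative_X_mul_X_sq_sub_one_pow_succ (n : ℕ) :
    derivative (X * (X ^ 2 - 1 : ℝ[X]) ^ (n + 1))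
      = (2 * n + 3 : ℝ) • (X ^ 2 - 1) ^ (n + 1) + (2 * n + 2 : ℝ) • (X ^ 2 - 1) ^ n := by
  simp only [derivative_mul, derivative_X, derivative_pow, derivative_sub,
    derivative_one, smul_eq_C_mul]
  simp only [map_add, map_mul, map_one, map_natCast, map_ofNat, Nat.cast_ofNat, Nat.cast_add,
    Nat.cast_one, Nat.add_sub_cancel]
  ring

theorem integralNegOneOne_X_sq_sub_one_pow_succ (n : ℕ) :
    (2 * n + 3) * integralNegOneOne ((X ^ 2 - 1) ^ (n + 1))
      = -(2 * n + 2) * integralNegOneOne ((X ^ 2 - 1) ^ n) := by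
  have h := integralNegOneOne_derivative (X * (X ^ 2 - 1 : ℝ[X]) ^ (n + 1))
  rw [derivative_X_mul_X_sq_sub_one_pow_succ, map_add, map_smul, map_smul, smul_eq_mul,
    smul_eq_mul] at h
  norm_num at h
  linarith

theorem integralNegOneOne_X_sq_sub_one_pow (n : ℕ) :
    integralNegOneOne ((X ^ 2 - 1) ^ n)
      = (-1) ^ n * 2 * (2 ^ n * n ! : ℝ) ^ 2 / (2 * n + 1) ! := by
  induction n with
  | zero => norm_num [integralNegOneOne_apply]
  | succ n ih =>
    have h := integralNegOneOne_X_sq_sub_one_pow_succ n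
    rw [ih] at h
    have h3 : (2 * n + 3 : ℝ) ≠ 0 := by positivity
    rw [show 2 * (n + 1) + 1 = 2 * n + 1 + 1 + 1 by ring, Nat.factorial_succ, Nat.factorial_succ,
      Nat.factorial_succ]
    rw [← mul_right_inj' h3, h]
    push_cast
    field_simp
    ring

theorem legendreInner_legendre_self (n : ℕ) :
    legendreInner (legendre n) (legendre n) = 2 / (2 * n + 1) := by
  have hD : derivative^[n] (derivative^[n] ((X ^ 2 - 1 : ℝ[X]) ^ n)) = C ((2 * n) ! : ℝ) := by
    rw [← Function.iterate_add_apply, ← two_mul, ← natDegree_X_sq_sub_one_pow (R := ℝ) n]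
    exact (monic_X_sq_sub_one.pow n).iterate_derivative_natDegree
  rw [legendre_eq_smul_iterate_derivative]
  simp only [map_smul, LinearMap.smul_apply]
  rw [legendreInner_iterate_derivative_X_sq_sub_one_pow, hD, legendreInner_apply,
    mul_comm _ (C _), ← smul_eq_C_mul, map_smul, integralNegOneOne_X_sq_sub_one_pow,
    Nat.factorial_succ]
  simp only [smul_eq_mul]
  push_cast
  field_simp
  rw [← pow_mul, pow_mul', neg_one_sq, one_pow]

theorem degree_derivative_legendre_lt (n : ℕ) : (derivative (legendre n)).degree < n :=
  degree_derivative_lt_of_degree_le (degree_legendre_le n)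

theorem legendreInner_legendre_of_lt {a b : ℕ} (hab : a < b) :
    legendreInner (legendre a) (legendre b) = 0 := by
  rw [legendreInner_comm]
  exact legendreInner_legendre_eq_zero ((degree_legendre_le a).trans_lt (by exact_mod_cast hab))

theorem legendreInner_legendre_derivative_legendre_of_le {a b : ℕ} (hba : b ≤ a) :
    legendreInner (legendre a) (derivative (legendre b)) = 0 :=
  legendreInner_legendre_eq_zero
    ((degree_derivative_legendre_lt b).trans_le (by exact_mod_cast hba))

theorem legendreInner_legendre_derivative_legendre {a b : ℕ} (hab : a ≤ b) :
    legendreInner (legendre a) (derivative (legendre b)) = 1 - (-1) ^ (a + b) := by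
  rw [legendreInner_derivative_right, legendreInner_comm,
    legendreInner_legendre_derivative_legendre_of_le hab, eval_legendre (one_pow 2),
    eval_legendre (one_pow 2), eval_legendre (by norm_num), eval_legendre (by norm_num), pow_add]
  ring

theorem legendreInner_derivative_legendre_derivative_legendre {a b : ℕ} (hab : a ≤ b) :
    legendreInner (derivative (legendre a)) (derivative (legendre b))
      = a * (a + 1) / 2 * (1 + (-1) ^ (a + b)) := by
  have hdeg : (derivative (derivative (legendre a))).degree < b :=
    degree_derivative_le.trans_lt
      ((degree_derivative_legendre_lt a).trans_le (by exact_mod_cast hab))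
  rw [legendreInner_derivative_right, legendreInner_comm, legendreInner_legendre_eq_zero hdeg,
    eval_derivative_legendre (one_pow 2), eval_derivative_legendre (by norm_num),
    eval_legendre (one_pow 2), eval_legendre (by norm_num), pow_add, pow_succ]
  ring

/-- The polynomial `Qₙ` of the statement. -/
noncomputable def tildeLegendre (n : ℕ) : ℝ[X] :=
  (1 / (n + 2) : ℝ) • ((n : ℝ) • legendre n - (2 / (n - 1) : ℝ) • derivative (legendre (n - 1)))

theorem legendreInner_tildeLegendre_of_lt {k n : ℕ} (hk : 2 ≤ k) (hkn : k < n) :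
    legendreInner (tildeLegendre k) (tildeLegendre n) = 0 := by
  simp only [tildeLegendre, map_smul, map_sub, LinearMap.smul_apply, LinearMap.sub_apply]
  rw [legendreInner_legendre_of_lt hkn, legendreInner_legendre_derivative_legendre (by omega),
    legendreInner_comm (derivative _), legendreInner_legendre_derivative_legendre_of_le (by omega),
    legendreInner_derivative_legendre_derivative_legendre (by omega),
    Nat.cast_pred (by omega)]
  have hsign : (-1 : ℝ) ^ (k + (n - 1)) = -(-1) ^ (k - 1 + (n - 1)) := by
    rw [show k + (n - 1) = k - 1 + (n - 1) + 1 by omega, pow_succ, mul_neg_one]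
  have hk1 : (k : ℝ) - 1 ≠ 0 := sub_ne_zero.mpr (by norm_cast; omega)
  have hn1 : (n : ℝ) - 1 ≠ 0 := sub_ne_zero.mpr (by norm_cast; omega)
  rw [hsign]
  simp only [smul_eq_mul]
  field_simp
  ring

theorem legendreInner_tildeLegendre_self {n : ℕ} (hn : 2 ≤ n) :
    legendreInner (tildeLegendre n) (tildeLegendre n)
      = 2 * n * (n + 1) / ((n - 1) * (n + 2) * (2 * n + 1)) := by
  simp only [tildeLegendre, map_smul, map_sub, LinearMap.smul_apply, LinearMap.sub_apply]
  rw [legendreInner_legendre_self, legendreInner_legendre_derivative_legendre_of_le (by omega),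
    legendreInner_comm (derivative _), legendreInner_legendre_derivative_legendre_of_le (by omega),
    legendreInner_derivative_legendre_derivative_legendre le_rfl, ← two_mul, pow_mul, neg_one_sq,
    one_pow, Nat.cast_pred (by omega)]
  have hn1 : (n : ℝ) - 1 ≠ 0 := sub_ne_zero.mpr (by norm_cast; omega)
  simp only [smul_eq_mul]
  field_simp
  ring

/-- The polynomials Q_n(z) = (1/(n+2))(n·P_n(z) − (2/(n−1))·P_{n−1}'(z)) are orthogonal with
∫_{−1}^{1} Q_k Q_n dz = c_n δ_{kn}, c_n = 2n(n+1)/((n−1)(n+2)(2n+1)). -/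
theorem tilde_legendre_orthogonal (k n : ℕ) (hk : 2 ≤ k) (hn : 2 ≤ n) :
    ∫ z in (-1 : ℝ)..1,
        ((1 / ((k : ℝ) + 2)) * ((k : ℝ) * (legendre k).eval z
            - (2 / ((k : ℝ) - 1)) * (legendre (k - 1)).derivative.eval z))
          * ((1 / ((n : ℝ) + 2)) * ((n : ℝ) * (legendre n).eval z
            - (2 / ((n : ℝ) - 1)) * (legendre (n - 1)).derivative.eval z))
      = if k = n then 2 * (n : ℝ) * ((n : ℝ) + 1) / (((n : ℝ) - 1) * ((n : ℝ) + 2) * (2 * (n : ℝ) + 1))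
        else 0 := by
  calc _ = legendreInner (tildeLegendre k) (tildeLegendre n) := by
        simp only [legendreInner_apply, integralNegOneOne_apply, tildeLegendre, eval_mul,
          eval_smul, eval_sub, smul_eq_mul]
    _ = _ := by
        rcases lt_trichotomy k n with hkn | rfl | hnk
        · rw [if_neg hkn.ne, legendreInner_tildeLegendre_of_lt hk hkn]
        · rw [if_pos rfl, legendreInner_tildeLegendre_self hk]
        · rw [if_neg hnk.ne', legendreInner_comm, legendreInner_tildeLegendre_of_lt hn hnk]
end

section
/- Let J, c ∈ ℝ and f : [−1,1] → ℝ be C¹, and set ω(z) = f(z)(1−z²)² + J(z³ − 3z) + c. Then ∫_{−1}^{1} ω'(z)²/(1−z²) dz = ∫_{−1}^{1} (d/dz[f(z)(1−z²)²])²/(1−z²) dz + 12 J². In particular ∫_{−1}^{1} ω'(z)²/(1−z²) dz ≥ 12 J², with equality iff f(1−z²)² is constant. -/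
/-!
Writing `g = f (1 - z²)²`, we have `ω' = g' - 3J(1 - z²)`, so away from `z = ±1`
`ω'² / (1 - z²) = g'² / (1 - z²) - 6J g' + 9J² (1 - z²)`. The middle term integrates to
`g 1 - g (-1) = 0` and the last one to `12 J²`. The remaining integral has a continuous
nonnegative integrand on `(-1, 1)`, so it vanishes iff `g' = 0` there, i.e. iff `g` is constant
on `[-1, 1]`.
-/

open MeasureTheory intervalIntegral Set

theorem intervalIntegral.integral_eq_zero_iff_eqOn_Ioo {F : ℝ → ℝ} {a b : ℝ} (hab : a ≤ b)
    (hF : ContinuousOn F (Ioo a b)) (hF_nonneg : ∀ x ∈ Ioo a b, 0 ≤ F x)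
    (hF_int : IntervalIntegrable F volume a b) :
    ∫ x in a..b, F x = 0 ↔ EqOn F 0 (Ioo a b) := by
  have hF_ae : 0 ≤ᵐ[volume.restrict (Ioc a b)] F := by
    rw [← restrict_Ioo_eq_restrict_Ioc]
    exact ae_restrict_of_forall_mem measurableSet_Ioo hF_nonneg
  rw [integral_eq_zero_iff_of_le_of_nonneg_ae hab hF_ae hF_int, ← restrict_Ioo_eq_restrict_Ioc]
  refine ⟨fun h => Measure.eqOn_open_of_ae_eq h isOpen_Ioo hF continuousOn_const, fun h => ?_⟩
  exact (ae_restrict_iff' measurableSet_Ioo).2 (ae_of_all _ h)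

theorem deriv_eqOn_zero_iff_exists_const {f : ℝ → ℝ} {a b : ℝ}
    (hcont : ContinuousOn f (Icc a b)) (hdiff : DifferentiableOn ℝ f (Ioo a b)) :
    (∀ x ∈ Ioo a b, deriv f x = 0) ↔ ∃ C, ∀ x ∈ Icc a b, f x = C := by
  constructor
  · intro hderiv
    refine ⟨f a, fun x hx => ?_⟩
    rcases hx.1.eq_or_lt with rfl | hax
    · rfl
    obtain ⟨c, hc, hc_slope⟩ := exists_deriv_eq_slope f hax
      (hcont.mono (Icc_subset_Icc_right hx.2)) (hdiff.mono (Ioo_subset_Ioo_right hx.2))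
    rw [hderiv c ⟨hc.1, hc.2.trans_le hx.2⟩, eq_comm, div_eq_zero_iff] at hc_slope
    rcases hc_slope with h | h <;> linarith
  · rintro ⟨C, hC⟩ x hx
    have : f =ᶠ[nhds x] fun _ => C := by
      filter_upwards [isOpen_Ioo.mem_nhds hx] with y hy
      exact hC y (Ioo_subset_Icc_self hy)
    rw [this.deriv_eq, deriv_const]

theorem integral_deriv_sq_div_one_sub_sq_nonneg (g : ℝ → ℝ) :
    0 ≤ ∫ z in (-1 : ℝ)..1, (deriv g z) ^ 2 / (1 - z ^ 2) :=
  integral_nonneg (by norm_num) fun z hz =>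
    div_nonneg (sq_nonneg _) (by nlinarith [hz.1, hz.2])

theorem integral_deriv_sq_div_one_sub_sq_eq_zero_iff {g : ℝ → ℝ} (hg : Differentiable ℝ g)
    (hg' : Continuous (deriv g))
    (hint : IntervalIntegrable (fun z => (deriv g z) ^ 2 / (1 - z ^ 2)) volume (-1) 1) :
    ∫ z in (-1 : ℝ)..1, (deriv g z) ^ 2 / (1 - z ^ 2) = 0 ↔
      ∃ C, ∀ z ∈ Icc (-1 : ℝ) 1, g z = C := by
  have hweight : ∀ z ∈ Ioo (-1 : ℝ) 1, 0 < 1 - z ^ 2 := fun z hz => by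
    nlinarith [hz.1, hz.2]
  rw [integral_eq_zero_iff_eqOn_Ioo (by norm_num) _ _ hint,
    ← deriv_eqOn_zero_iff_exists_const hg.continuous.continuousOn hg.differentiableOn]
  · refine forall₂_congr fun z hz => ?_
    simp [(hweight z hz).ne']
  · exact (hg'.pow 2).continuousOn.div (by fun_prop) fun z hz => (hweight z hz).ne'
  · exact fun z hz => div_nonneg (sq_nonneg _) (hweight z hz).le

theorem hasDerivAt_cubic (J c z : ℝ) :
    HasDerivAt (fun z : ℝ => J * (z ^ 3 - 3 * z) + c) (-(3 * J * (1 - z ^ 2))) z := by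
  refine ((((hasDerivAt_pow 3 z).fun_sub ((hasDerivAt_id' z).const_mul 3)).const_mul J).add_const
    c).congr_deriv ?_
  push_cast
  ring

theorem integral_one_sub_sq : ∫ z in (-1 : ℝ)..1, (1 - z ^ 2) = 4 / 3 := by
  rw [integral_sub intervalIntegrable_const (intervalIntegrable_pow 2), integral_pow]
  norm_num

theorem sq_sub_mul_div_self {K : Type*} [Field K] {a k w : K} (hw : w ≠ 0) :
    (a - k * w) ^ 2 / w = a ^ 2 / w - 2 * k * a + k ^ 2 * w := by
  field_simp
  ring

theorem integral_deriv_add_cubic_sq_div {g : ℝ → ℝ} (J c : ℝ) (hg : Differentiable ℝ g)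
    (hg' : Continuous (deriv g)) (hg_ends : g (-1) = g 1)
    (hint : IntervalIntegrable (fun z => (deriv g z) ^ 2 / (1 - z ^ 2)) volume (-1) 1) :
    ∫ z in (-1 : ℝ)..1, (deriv (fun z => g z + (J * (z ^ 3 - 3 * z) + c)) z) ^ 2 / (1 - z ^ 2)
      = (∫ z in (-1 : ℝ)..1, (deriv g z) ^ 2 / (1 - z ^ 2)) + 12 * J ^ 2 := by
  have hderiv (z : ℝ) :
      deriv (fun z => g z + (J * (z ^ 3 - 3 * z) + c)) z = deriv g z - 3 * J * (1 - z ^ 2) := by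
    rw [((hg z).hasDerivAt.fun_add (hasDerivAt_cubic J c z)).deriv]
    ring
  have hexpand : ∀ᵐ z, z ∈ uIoc (-1 : ℝ) 1 →
      (deriv (fun z => g z + (J * (z ^ 3 - 3 * z) + c)) z) ^ 2 / (1 - z ^ 2)
        = (deriv g z) ^ 2 / (1 - z ^ 2) - 2 * (3 * J) * deriv g z
          + (3 * J) ^ 2 * (1 - z ^ 2) := by
    filter_upwards [Measure.ae_ne volume 1] with z hz1 hz
    rw [uIoc_of_le (by norm_num)] at hz
    have hw : 1 - z ^ 2 ≠ 0 := by nlinarith [hz.1, lt_of_le_of_ne hz.2 hz1]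
    rw [hderiv, sq_sub_mul_div_self hw]
  have hcross : ∫ z in (-1 : ℝ)..1, deriv g z = 0 := by
    rw [integral_deriv_eq_sub (fun z _ => hg z) (hg'.intervalIntegrable _ _), hg_ends, sub_self]
  have hcross_int : IntervalIntegrable (fun z => 2 * (3 * J) * deriv g z) volume (-1) 1 :=
    (hg'.intervalIntegrable _ _).const_mul _
  rw [integral_congr_ae hexpand,
    integral_add (hint.sub hcross_int) (Continuous.intervalIntegrable (by fun_prop) _ _),
    integral_sub hint hcross_int, intervalIntegral.integral_const_mul,
    intervalIntegral.integral_const_mul, hcross, integral_one_sub_sq]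
  ring

theorem angular_momentum_lower_bound_general (J c : ℝ) (f : ℝ → ℝ) (hf : ContDiff ℝ 1 f)
    (ω g : ℝ → ℝ)
    (hω : ω = fun z => f z * (1 - z ^ 2) ^ 2 + J * (z ^ 3 - 3 * z) + c)
    (hg : g = fun z => f z * (1 - z ^ 2) ^ 2)
    (hint₂ : IntervalIntegrable (fun z => (deriv g z) ^ 2 / (1 - z ^ 2)) volume (-1) 1) :
    (∫ z in (-1 : ℝ)..1, (deriv ω z) ^ 2 / (1 - z ^ 2))
        = (∫ z in (-1 : ℝ)..1, (deriv g z) ^ 2 / (1 - z ^ 2)) + 12 * J ^ 2 ∧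
    12 * J ^ 2 ≤ ∫ z in (-1 : ℝ)..1, (deriv ω z) ^ 2 / (1 - z ^ 2) ∧
    ((∫ z in (-1 : ℝ)..1, (deriv ω z) ^ 2 / (1 - z ^ 2)) = 12 * J ^ 2 ↔
      ∃ C : ℝ, ∀ z ∈ Set.Icc (-1 : ℝ) 1, f z * (1 - z ^ 2) ^ 2 = C) := by
  have hg_C1 : ContDiff ℝ 1 g := hg ▸ hf.mul (by fun_prop)
  have hg_diff : Differentiable ℝ g := hg_C1.differentiable one_ne_zero
  have hg_deriv : Continuous (deriv g) := hg_C1.continuous_deriv le_rfl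
  have hg_ends : g (-1) = g 1 := by simp [hg]
  have hω_split : ω = fun z => g z + (J * (z ^ 3 - 3 * z) + c) := by
    rw [hω, hg]
    funext z
    ring
  have hsplit : (∫ z in (-1 : ℝ)..1, (deriv ω z) ^ 2 / (1 - z ^ 2))
      = (∫ z in (-1 : ℝ)..1, (deriv g z) ^ 2 / (1 - z ^ 2)) + 12 * J ^ 2 :=
    hω_split ▸ integral_deriv_add_cubic_sq_div J c hg_diff hg_deriv hg_ends hint₂
  have hnonneg := integral_deriv_sq_div_one_sub_sq_nonneg g
  refine ⟨hsplit, by linarith, ?_⟩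
  rw [hsplit, add_eq_right, integral_deriv_sq_div_one_sub_sq_eq_zero_iff hg_diff hg_deriv hint₂, hg]

/-- For ω(z) = f(z)(1−z²)² + J(z³−3z) + c with f of class C¹:
∫_{−1}^1 ω'²/(1−z²) dz = ∫_{−1}^1 (d/dz[f(1−z²)²])²/(1−z²) dz + 12J², hence the integral
is ≥ 12J² with equality iff f(1−z²)² is constant on [−1,1]. -/
theorem angular_momentum_lower_bound (J c : ℝ) (f : ℝ → ℝ) (hf : ContDiff ℝ 1 f)
    (ω g : ℝ → ℝ)
    (hω : ω = fun z => f z * (1 - z ^ 2) ^ 2 + J * (z ^ 3 - 3 * z) + c)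
    (hg : g = fun z => f z * (1 - z ^ 2) ^ 2)
    (hint₁ : IntervalIntegrable (fun z => (deriv ω z) ^ 2 / (1 - z ^ 2)) volume (-1) 1)
    (hint₂ : IntervalIntegrable (fun z => (deriv g z) ^ 2 / (1 - z ^ 2)) volume (-1) 1) :
    (∫ z in (-1 : ℝ)..1, (deriv ω z) ^ 2 / (1 - z ^ 2))
        = (∫ z in (-1 : ℝ)..1, (deriv g z) ^ 2 / (1 - z ^ 2)) + 12 * J ^ 2 ∧
    12 * J ^ 2 ≤ ∫ z in (-1 : ℝ)..1, (deriv ω z) ^ 2 / (1 - z ^ 2) ∧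
    ((∫ z in (-1 : ℝ)..1, (deriv ω z) ^ 2 / (1 - z ^ 2)) = 12 * J ^ 2 ↔
      ∃ C : ℝ, ∀ z ∈ Set.Icc (-1 : ℝ) 1, f z * (1 - z ^ 2) ^ 2 = C) :=
  angular_momentum_lower_bound_general J c f hf ω g hω hg hint₂
end

section
/- Fix an integer n ≥ 2, set N = n(n+1)/2, let m > 0, and let ϱ(u) = m(1 − m/(2e^u))/(4e^{3u}(1 + m/(2e^u))⁷) (i.e. ϱ(r) with r = e^u). Define y_n(r) = (N y_{nh}/(2N+1))·( ((n−1)/(n+1))·(m/(2r))^{n+1} + ((n+2)/n)·(m/(2r))^{n} ) for a constant y_{nh}. Then y_n (as a function of u = ln r) solves the fourth-order ODE (∂_u² − N)[ϱ(∂_u² − N)y] − 2(N−1)∂_u(ϱ ∂_u y) + 3N(N−1)ϱ y = 0 on (ln(m/2), ∞), and y_n(m/2) = y_{nh}. -/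
open Real

lemma LS (m : ℝ) (v : ℝ) :
    HasDerivAt (fun w : ℝ => m / (2 * exp w)) (-(m / (2 * exp v))) v := by
  have h1 : HasDerivAt (fun w : ℝ => 2 * exp w) (2 * exp v) v := by
    simpa using (Real.hasDerivAt_exp v).const_mul 2
  have h2 := (hasDerivAt_const v m).div h1 (by positivity)
  refine h2.congr_deriv ?_
  have := (Real.exp_pos v).ne'
  field_simp
  ring

lemma LSpow (m : ℝ) (k : ℕ) (hk : 1 ≤ k) (v : ℝ) :
    HasDerivAt (fun w : ℝ => (m / (2 * exp w)) ^ k) (-((k : ℝ) * (m / (2 * exp v)) ^ k)) v := by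
  obtain ⟨j, rfl⟩ : ∃ j, k = j + 1 := ⟨k - 1, by omega⟩
  refine ((LS m v).pow (j + 1)).congr_deriv ?_
  simp only [Nat.add_sub_cancel]
  push_cast
  ring

set_option maxHeartbeats 1000000 in
/-- y_n(r) = (N y_{nh}/(2N+1))(((n−1)/(n+1))(m/(2r))^{n+1} + ((n+2)/n)(m/(2r))^n), as a
function of u = ln r, solves the Euler–Lagrange equation
(∂_u² − N)[ϱ(∂_u² − N)y] − 2(N−1)∂_u(ϱ∂_u y) + 3N(N−1)ϱy = 0 on (ln(m/2), ∞),
with y(m/2) = y_{nh}. -/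
theorem minimizer_solves_EL (n : ℕ) (hn : 2 ≤ n) (m ynh : ℝ) (hm : 0 < m)
    (N : ℝ) (hN : N = (n : ℝ) * ((n : ℝ) + 1) / 2)
    (ϱ y : ℝ → ℝ)
    (hϱ : ϱ = fun u => m * (1 - m / (2 * exp u)) / (4 * exp (3 * u) * (1 + m / (2 * exp u)) ^ 7))
    (hy : y = fun u => (N * ynh / (2 * N + 1)) *
        ((((n : ℝ) - 1) / ((n : ℝ) + 1)) * (m / (2 * exp u)) ^ (n + 1)
          + (((n : ℝ) + 2) / (n : ℝ)) * (m / (2 * exp u)) ^ n)) :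
    (∀ u : ℝ, Real.log (m / 2) < u →
        deriv (deriv (fun v => ϱ v * (deriv (deriv y) v - N * y v))) u
            - N * (ϱ u * (deriv (deriv y) u - N * y u))
            - 2 * (N - 1) * deriv (fun v => ϱ v * deriv y v) u
            + 3 * N * (N - 1) * ϱ u * y u = 0) ∧
    y (Real.log (m / 2)) = ynh := by
  obtain ⟨p, rfl⟩ : ∃ p, n = p + 2 := ⟨n - 2, by omega⟩
  have hm0 : m ≠ 0 := ne_of_gt hm
  have hP2 : ((p:ℝ) + 2) ≠ 0 := by positivity
  have hP3 : ((p:ℝ) + 3) ≠ 0 := by positivity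
  have hP21 : ((p:ℝ) + 2 + 1) ≠ 0 := by positivity
  have hPc : (((p+2:ℕ):ℝ)) ≠ 0 := by positivity
  have hPc1 : (((p+2:ℕ):ℝ) + 1) ≠ 0 := by positivity
  have hSpos : ∀ v : ℝ, 0 < m / (2 * exp v) := fun v => by positivity
  have hexp : ∀ v : ℝ, exp v ≠ 0 := fun v => (Real.exp_pos v).ne'
  have h1S : ∀ v : ℝ, (1 : ℝ) + m / (2 * exp v) ≠ 0 := fun v => by positivity
  have hϱS : ∀ v : ℝ, ϱ v = 2 * (m / (2 * exp v)) ^ 3 * (1 - (m / (2 * exp v))) / (m ^ 2 * (1 + (m / (2 * exp v))) ^ 7) := by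
    intro v
    simp only [hϱ]
    have h3 : exp (3 * v) = exp v ^ 3 := by
      rw [show (3:ℝ) * v = v + (v + v) by ring, Real.exp_add, Real.exp_add]; ring
    rw [h3]
    have := hexp v
    have := h1S v
    field_simp
    ring
  set C := N * ynh / (2 * N + 1) with hC
  clear_value C
  constructor
  · intro u _
    have hy1 : ∀ v : ℝ, HasDerivAt y (C * (-(((p:ℝ)+1) * (m / (2 * exp v)) ^ (p+3)) - ((p:ℝ)+4) * (m / (2 * exp v)) ^ (p+2))) v := by
      intro v
      rw [hy]
      have h1 := (LSpow m (p+2+1) (by omega) v).const_mul ((((p+2:ℕ):ℝ) - 1) / (((p+2:ℕ):ℝ) + 1))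
      have h2 := (LSpow m (p+2) (by omega) v).const_mul ((((p+2:ℕ):ℝ) + 2) / ((p+2:ℕ):ℝ))
      refine ((h1.add h2).const_mul C).congr_deriv ?_
      push_cast
      have h1t := h1S v
      have hst := (hSpos v).ne'
      set t := m / (2 * exp v) with ht
      clear_value t
      field_simp
      ring
    have hdy : deriv y = fun v => C * (-(((p:ℝ)+1) * (m / (2 * exp v)) ^ (p+3)) - ((p:ℝ)+4) * (m / (2 * exp v)) ^ (p+2)) := funext fun v => (hy1 v).deriv
    have hy2 : ∀ v : ℝ, HasDerivAt (fun v => C * (-(((p:ℝ)+1) * (m / (2 * exp v)) ^ (p+3)) - ((p:ℝ)+4) * (m / (2 * exp v)) ^ (p+2))) (C * (((p:ℝ)+3) * ((p:ℝ)+1) * (m / (2 * exp v)) ^ (p+3) + ((p:ℝ)+2) * ((p:ℝ)+4) * (m / (2 * exp v)) ^ (p+2))) v := by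
      intro v
      have h1 := ((LSpow m (p+3) (by omega) v).const_mul (((p:ℝ)+1))).neg
      have h2 := (LSpow m (p+2) (by omega) v).const_mul (((p:ℝ)+4))
      refine ((h1.sub h2).const_mul C).congr_deriv ?_
      push_cast
      ring
    have hddy : deriv (deriv y) = fun v => C * (((p:ℝ)+3) * ((p:ℝ)+1) * (m / (2 * exp v)) ^ (p+3) + ((p:ℝ)+2) * ((p:ℝ)+4) * (m / (2 * exp v)) ^ (p+2)) := by
      rw [hdy]; exact funext fun v => (hy2 v).deriv
    have hGfun : (fun v => ϱ v * (deriv (deriv y) v - N * y v)) = fun v => C * ((p:ℝ)+1) * ((p:ℝ)+4) / m^2 * (m / (2 * exp v)) ^ (p+5) * (1 - (m / (2 * exp v))) / (1 + (m / (2 * exp v))) ^ 6 := by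
      funext v
      simp only [hddy]
      simp only [hy, hϱS, hN]
      push_cast
      have h1t := h1S v
      have hst := (hSpos v).ne'
      set t := m / (2 * exp v) with ht
      clear_value t
      field_simp
      ring
    have hG1 : ∀ v : ℝ, HasDerivAt (fun v => C * ((p:ℝ)+1) * ((p:ℝ)+4) / m^2 * (m / (2 * exp v)) ^ (p+5) * (1 - (m / (2 * exp v))) / (1 + (m / (2 * exp v))) ^ 6) (-(C * ((p:ℝ)+1) * ((p:ℝ)+4) / m^2 * (m / (2 * exp v)) ^ (p+5) * (((p:ℝ)+5) - 7 * (m / (2 * exp v)) - (p:ℝ) * (m / (2 * exp v))^2)) / (1 + (m / (2 * exp v))) ^ 7) v := by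
      intro v
      have hnum := ((LSpow m (p+5) (by omega) v).const_mul (C * ((p:ℝ)+1) * ((p:ℝ)+4) / m^2)).mul ((LS m v).const_sub 1)
      have hden := ((LS m v).const_add 1).pow 6
      refine (hnum.div hden (pow_ne_zero 6 (h1S v))).congr_deriv ?_
      norm_num
      push_cast
      have h1t := h1S v
      have hst := (hSpos v).ne'
      set t := m / (2 * exp v) with ht
      clear_value t
      field_simp
      ring
    have hG2 : ∀ v : ℝ, HasDerivAt (fun v => -(C * ((p:ℝ)+1) * ((p:ℝ)+4) / m^2 * (m / (2 * exp v)) ^ (p+5) * (((p:ℝ)+5) - 7 * (m / (2 * exp v)) - (p:ℝ) * (m / (2 * exp v))^2)) / (1 + (m / (2 * exp v))) ^ 7) (C * ((p:ℝ)+1) * ((p:ℝ)+4) / m^2 * (m / (2 * exp v)) ^ (p+5) * (((p:ℝ)+5)^2 + ((p:ℝ)^2 - 4*(p:ℝ) - 52) * (m / (2 * exp v)) + (7 - 14*(p:ℝ) - (p:ℝ)^2) * (m / (2 * exp v))^2 - (p:ℝ)^2 * (m / (2 * exp v))^3) / (1 + (m / (2 * exp v))) ^ 8) v := by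
      intro v
      have hpoly := (((LS m v).const_mul 7).const_sub ((p:ℝ)+5)).sub ((LSpow m 2 (by omega) v).const_mul ((p:ℝ)))
      have hnum := (((LSpow m (p+5) (by omega) v).const_mul (C * ((p:ℝ)+1) * ((p:ℝ)+4) / m^2)).mul hpoly).neg
      have hden := ((LS m v).const_add 1).pow 7
      refine (hnum.div hden (pow_ne_zero 7 (h1S v))).congr_deriv ?_
      norm_num
      push_cast
      have h1t := h1S v
      have hst := (hSpos v).ne'
      set t := m / (2 * exp v) with ht
      clear_value t
      field_simp
      ring
    have hFfun : (fun v => ϱ v * deriv y v) = fun v => -(2 * C / m^2 * (m / (2 * exp v)) ^ (p+5) * (1 - (m / (2 * exp v))) * (((p:ℝ)+1) * (m / (2 * exp v)) + ((p:ℝ)+4))) / (1 + (m / (2 * exp v))) ^ 7 := by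
      funext v
      simp only [hdy, hϱS]
      push_cast
      have h1t := h1S v
      have hst := (hSpos v).ne'
      set t := m / (2 * exp v) with ht
      clear_value t
      field_simp
      ring
    have hF1 : ∀ v : ℝ, HasDerivAt (fun v => -(2 * C / m^2 * (m / (2 * exp v)) ^ (p+5) * (1 - (m / (2 * exp v))) * (((p:ℝ)+1) * (m / (2 * exp v)) + ((p:ℝ)+4))) / (1 + (m / (2 * exp v))) ^ 7) (2 * C / m^2 * (m / (2 * exp v)) ^ (p+5) * (((p:ℝ)+4)*((p:ℝ)+5) + ((p:ℝ)^2 - (p:ℝ) - 26) * (m / (2 * exp v)) - ((p:ℝ)^2 + 11*(p:ℝ) + 4) * (m / (2 * exp v))^2 - ((p:ℝ)+1)*(p:ℝ) * (m / (2 * exp v))^3) / (1 + (m / (2 * exp v))) ^ 8) v := by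
      intro v
      have hlin := ((LS m v).const_mul (((p:ℝ)+1))).add_const (((p:ℝ)+4))
      have hnum := ((((LSpow m (p+5) (by omega) v).const_mul (2 * C / m^2)).mul ((LS m v).const_sub 1)).mul hlin).neg
      have hden := ((LS m v).const_add 1).pow 7
      refine (hnum.div hden (pow_ne_zero 7 (h1S v))).congr_deriv ?_
      norm_num
      push_cast
      have h1t := h1S v
      have hst := (hSpos v).ne'
      set t := m / (2 * exp v) with ht
      clear_value t
      field_simp
      ring
    rw [hGfun, hFfun, funext fun v => (hG1 v).deriv, (hG2 u).deriv, (hF1 u).deriv, hddy, hy]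
    simp only [hϱS, hN]
    push_cast
    have h1t := h1S u
    have hst := (hSpos u).ne'
    set t := m / (2 * exp u) with ht
    clear_value t
    field_simp
    ring
  · simp only [hy]
    have hx : exp (Real.log (m / 2)) = m / 2 := Real.exp_log (by positivity)
    rw [hx, hC, hN]
    have h1 : m / (2 * (m / 2)) = 1 := by field_simp
    rw [h1]
    push_cast
    field_simp
    ring
end

section
/- With m > 0, n ≥ 2, N = n(n+1)/2, c_n = 2n(n+1)/((n−1)(n+2)(2n+1)), and y_n(r) = (N y_{nh}/(2N+1))( ((n−1)/(n+1))(m/(2r))^{n+1} + ((n+2)/n)(m/(2r))^{n} ): the boundary expression (c_n/(32m²))·y_{nh}·(ÿ_n − N y_n)|_{r=m/2} equals n²(n+1)² y_{nh}² / (32 m² (n²+n+1)(2n+1)), where dots denote derivatives with respect to u = ln r. -/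
open Real

/-
In the variable u = log r the profile y_n is a combination of the two modes (m/(2r))^(n+1)
and (m/(2r))^n, i.e. of e^{-(n+1)u} and e^{-nu}, so the operator d²/du² − N acts on them by the
scalars (n+1)² − N = (n+1)(n+2)/2 and n² − N = n(n−1)/2. At r = m/2 both modes equal 1, and
with the given weights the two contributions add up to (n−1)(n+2), which cancels against c_n.
-/

theorem hasDerivAt_div_exp_pow (a : ℝ) (k : ℕ) (u : ℝ) :
    HasDerivAt (fun u => (a / exp u) ^ k) (-k * (a / exp u) ^ k) u := by
  have hq : HasDerivAt (fun u => a / exp u) (-(a / exp u)) u :=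
    ((hasDerivAt_const u a).div (hasDerivAt_exp u) (exp_ne_zero u)).congr_deriv
      (by field_simp; ring)
  refine ((hasDerivAt_pow k _).comp u hq).congr_deriv ?_
  rcases k with _ | k
  · simp
  · rw [Nat.add_sub_cancel]
    push_cast
    ring

theorem deriv_two_modes (C A B a : ℝ) (j k : ℕ) :
    deriv (fun u => C * (A * (a / exp u) ^ j + B * (a / exp u) ^ k))
      = fun u => C * (A * -j * (a / exp u) ^ j + B * -k * (a / exp u) ^ k) := by
  funext u
  refine HasDerivAt.deriv ((((hasDerivAt_div_exp_pow a j u).const_mul A).add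
    ((hasDerivAt_div_exp_pow a k u).const_mul B)).const_mul C |>.congr_deriv ?_)
  ring

theorem deriv_deriv_two_modes (C A B a : ℝ) (j k : ℕ) :
    deriv (deriv fun u => C * (A * (a / exp u) ^ j + B * (a / exp u) ^ k))
      = fun u => C * (A * j ^ 2 * (a / exp u) ^ j + B * k ^ 2 * (a / exp u) ^ k) := by
  rw [deriv_two_modes, deriv_two_modes]
  funext u
  ring

theorem div_exp_log_self {a : ℝ} (ha : 0 < a) : a / exp (log a) = 1 := by
  rw [exp_log ha, div_self ha.ne']

theorem two_modes_weighted_sum (n : ℝ) (hn0 : n ≠ 0) (hn1 : n + 1 ≠ 0) :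
    (n - 1) / (n + 1) * ((n + 1) ^ 2 - n * (n + 1) / 2)
      + (n + 2) / n * (n ^ 2 - n * (n + 1) / 2) = (n - 1) * (n + 2) := by
  field_simp
  ring

/-- The minimum value of the functional in terms of the boundary datum:
(c_n/(32m²))·y_{nh}·(ÿ_n − N y_n)|_{r=m/2} = n²(n+1)² y_{nh}²/(32m²(n²+n+1)(2n+1)),
with derivatives taken with respect to u = ln r. -/
theorem minimum_value_boundary (n : ℕ) (hn : 2 ≤ n) (m ynh : ℝ) (hm : 0 < m)
    (N cn : ℝ) (hN : N = (n : ℝ) * ((n : ℝ) + 1) / 2)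
    (hc : cn = 2 * (n : ℝ) * ((n : ℝ) + 1)
        / (((n : ℝ) - 1) * ((n : ℝ) + 2) * (2 * (n : ℝ) + 1)))
    (y : ℝ → ℝ)
    (hy : y = fun u => (N * ynh / (2 * N + 1)) *
        ((((n : ℝ) - 1) / ((n : ℝ) + 1)) * (m / (2 * exp u)) ^ (n + 1)
          + (((n : ℝ) + 2) / (n : ℝ)) * (m / (2 * exp u)) ^ n)) :
    cn / (32 * m ^ 2) * ynh
        * (deriv (deriv y) (Real.log (m / 2)) - N * y (Real.log (m / 2)))
      = (n : ℝ) ^ 2 * ((n : ℝ) + 1) ^ 2 * ynh ^ 2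
          / (32 * m ^ 2 * ((n : ℝ) ^ 2 + (n : ℝ) + 1) * (2 * (n : ℝ) + 1)) := by
  simp only [div_mul_eq_div_div m 2] at hy
  have hn' : (2 : ℝ) ≤ n := by exact_mod_cast hn
  have hn1 : (n : ℝ) - 1 ≠ 0 := by linarith
  have hmodes : m / 2 / exp (log (m / 2)) = 1 := div_exp_log_self (half_pos hm)
  have hbracket : deriv (deriv y) (log (m / 2)) - N * y (log (m / 2))
      = N * ynh / (2 * N + 1) * (((n : ℝ) - 1) * ((n : ℝ) + 2)) := by
    rw [hy, deriv_deriv_two_modes, ← two_modes_weighted_sum n (by positivity) (by positivity)]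
    simp only [hmodes, one_pow, mul_one, hN]
    push_cast
    ring
  rw [hbracket, hc, hN]
  field_simp
end
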